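/- Read back and free variable occurrences: if t is a term with a free occurrence of the variable x, then for every finite set Δ of variable names there exist a context C with interface Δ ∪ {x} such that C⟨x⟩ = t and C does not capture x. -/
import Mathlib


/-- Expressions of the linear substitution calculus, with annotated holes. -/
inductive Expr : Type
  | var : String → Expr
  | hole : Finset String → Expr
  | lam : String → Expr → Expr
  | app : Expr → Expr → Expr
  | esub : Expr → String → Expr → Expr   -- t[x←s]
deriving DecidableEq

namespace Expr

/-- Number of holes. -/
def holes : Expr → ℕ
  | var _ => 0
  | hole _ => 1
  | lam _ e => e.holes
  | app e f => e.holes + f.holes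
  | esub e _ f => e.holes + f.holes

/-- Terms are expressions without holes. -/
def IsTerm (e : Expr) : Prop := e.holes = 0

/-- Contexts are expressions with exactly one hole. -/
def IsContext (e : Expr) : Prop := e.holes = 1

/-- Free variables (holes contribute their annotation). -/
def fv : Expr → Finset String
  | var x => {x}
  | hole Δ => Δ
  | lam x e => e.fv \ {x}
  | app e f => e.fv ∪ f.fv
  | esub e x f => (e.fv \ {x}) ∪ f.fv

/-- Interface: the union of the annotations of the holes. -/
def intf : Expr → Finset String
  | var _ => ∅
  | hole Δ => Δ
  | lam _ e => e.intf
  | app e f => e.intf ∪ f.intf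
  | esub e _ f => e.intf ∪ f.intf

/-- Variables captured by a context (binders above a hole). -/
def cv : Expr → Finset String
  | var _ => ∅
  | hole _ => ∅
  | lam x e => if 0 < e.holes then e.cv ∪ {x} else ∅
  | app e f => e.cv ∪ f.cv
  | esub e x f => (if 0 < e.holes then e.cv ∪ {x} else ∅) ∪ f.cv

/-- Plugging: replace the hole(s) of the first expression by the second. -/
def plug : Expr → Expr → Expr
  | var y, _ => var y
  | hole _, e => e
  | lam x C, e => lam x (C.plug e)
  | app C D, e => app (C.plug e) (D.plug e)
  | esub C x D, e => esub (C.plug e) x (D.plug e)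

/-- Multiplicity: number of free occurrences of a variable. -/
def mult (x : String) : Expr → ℕ
  | var y => if y = x then 1 else 0
  | hole _ => 0
  | lam y e => if y = x then 0 else e.mult x
  | app e f => e.mult x + f.mult x
  | esub e y f => (if y = x then 0 else e.mult x) + f.mult x

/-- Number of explicit substitution constructors. -/
def es : Expr → ℕ
  | var _ => 0
  | hole _ => 0
  | lam _ e => e.es
  | app e f => e.es + f.es
  | esub e _ f => e.es + f.es + 1

/-- Erase hole annotations. -/
def eraseAnn : Expr → Expr
  | var x => var x
  | hole _ => hole ∅
  | lam x e => lam x e.eraseAnn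
  | app e f => app e.eraseAnn f.eraseAnn
  | esub e x f => esub e.eraseAnn x f.eraseAnn

/-- Substitution contexts L ::= ⟨·⟩ | L[x←t]. -/
inductive IsSubCtx : Expr → Prop
  | hole (Δ : Finset String) : IsSubCtx (hole Δ)
  | esub {L : Expr} (x : String) {t : Expr} : IsSubCtx L → t.IsTerm →
      IsSubCtx (esub L x t)

/-- Closure of a relation under arbitrary contexts. -/
inductive CtxCl (R : Expr → Expr → Prop) : Expr → Expr → Prop
  | base {t s} : R t s → CtxCl R t s
  | lam {t s} (x) : CtxCl R t s → CtxCl R (lam x t) (lam x s)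
  | appL {t s} (u) : CtxCl R t s → CtxCl R (app t u) (app s u)
  | appR {t s} (u) : CtxCl R t s → CtxCl R (app u t) (app u s)
  | esubL {t s} (x u) : CtxCl R t s → CtxCl R (esub t x u) (esub s x u)
  | esubR {t s} (x u) : CtxCl R t s → CtxCl R (esub u x t) (esub u x s)

/-- Root multiplicative rule  L⟨λx.b⟩ a →m L⟨b[x←a]⟩. -/
def RootM (t s : Expr) : Prop :=
  ∃ (L : Expr) (x : String) (b a : Expr), IsSubCtx L ∧ b.IsTerm ∧ a.IsTerm ∧ Disjoint L.cv a.fv ∧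
    (lam x b).fv ∪ a.fv ⊆ L.intf ∧
    t = app (L.plug (lam x b)) a ∧ s = L.plug (esub b x a)

/-- Root Milner exponential rule  C⟨x⟩[x←u] →e C⟨u⟩[x←u]. -/
def RootE (t s : Expr) : Prop :=
  ∃ (C : Expr) (x : String) (u : Expr), C.IsContext ∧ u.IsTerm ∧ x ∉ C.cv ∧ Disjoint C.cv u.fv ∧
    insert x u.fv ⊆ C.intf ∧
    t = esub (C.plug (var x)) x u ∧ s = esub (C.plug u) x u

/-- Root garbage collection rule  s[x←u] →gc s  if x ∉ fv(s). -/
def RootGC (t s : Expr) : Prop :=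
  ∃ (x : String) (u : Expr), s.IsTerm ∧ u.IsTerm ∧ x ∉ s.fv ∧ t = esub s x u

def StepM : Expr → Expr → Prop := CtxCl RootM
def StepE : Expr → Expr → Prop := CtxCl RootE
def StepGC : Expr → Expr → Prop := CtxCl RootGC
def StepLSC (t s : Expr) : Prop := StepM t s ∨ StepE t s ∨ StepGC t s

/-- Structural equivalence ≡. -/
inductive SEq : Expr → Expr → Prop
  | lamsub {t s : Expr} (x y : String) : y ∉ s.fv →
      SEq (esub (lam y t) x s) (lam y (esub t x s))
  | appsub {t u s : Expr} (x : String) : x ∉ u.fv →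
      SEq (esub (app t u) x s) (app (esub t x s) u)
  | comm {t s u : Expr} (x y : String) : y ∉ s.fv → x ∉ u.fv →
      SEq (esub (esub t x s) y u) (esub (esub t y u) x s)
  | refl (t) : SEq t t
  | symm {t s} : SEq t s → SEq s t
  | trans {t s u} : SEq t s → SEq s u → SEq t u
  | lam {t s} (x) : SEq t s → SEq (lam x t) (lam x s)
  | appL {t s} (u) : SEq t s → SEq (app t u) (app s u)
  | appR {t s} (u) : SEq t s → SEq (app u t) (app u s)
  | esubL {t s} (x u) : SEq t s → SEq (esub t x u) (esub s x u)
  | esubR {t s} (x u) : SEq t s → SEq (esub u x t) (esub u x s)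

end Expr

open Expr

lemma plug_of_noholes : ∀ (e a : Expr), e.holes = 0 → e.plug a = e
  | .var _, _, _ => rfl
  | .hole _, _, h => by simp [Expr.holes] at h
  | .lam x e, a, h => by
    simp only [Expr.plug]
    rw [plug_of_noholes e a h]
  | .app e f, a, h => by
    simp only [Expr.holes, Nat.add_eq_zero] at h
    simp only [Expr.plug]
    rw [plug_of_noholes e a h.1, plug_of_noholes f a h.2]
  | .esub e x f, a, h => by
    simp only [Expr.holes, Nat.add_eq_zero] at h
    simp only [Expr.plug]
    rw [plug_of_noholes e a h.1, plug_of_noholes f a h.2]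

lemma cv_of_noholes : ∀ (e : Expr), e.holes = 0 → e.cv = ∅
  | .var _, _ => rfl
  | .hole _, h => by simp [Expr.holes] at h
  | .lam x e, h => by simp [Expr.cv, Expr.holes] at h ⊢; omega
  | .app e f, h => by
    simp only [Expr.holes, Nat.add_eq_zero] at h
    simp [Expr.cv, cv_of_noholes e h.1, cv_of_noholes f h.2]
  | .esub e x f, h => by
    simp only [Expr.holes, Nat.add_eq_zero] at h
    simp [Expr.cv, cv_of_noholes f h.2, h.1]

lemma intf_of_noholes : ∀ (e : Expr), e.holes = 0 → e.intf = ∅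
  | .var _, _ => rfl
  | .hole _, h => by simp [Expr.holes] at h
  | .lam x e, h => intf_of_noholes e h
  | .app e f, h => by
    simp only [Expr.holes, Nat.add_eq_zero] at h
    simp [Expr.intf, intf_of_noholes e h.1, intf_of_noholes f h.2]
  | .esub e x f, h => by
    simp only [Expr.holes, Nat.add_eq_zero] at h
    simp [Expr.intf, intf_of_noholes e h.1, intf_of_noholes f h.2]

/-- if x occurs free in the term t then, for every set Δ of names,
t factors as C⟨x⟩ for a context C of interface Δ ∪ {x} not capturing x. -/
theorem free_occurrence_factorisation {t : Expr} (ht : t.IsTerm) {x : String}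
    (hx : 1 ≤ t.mult x) (Δ : Finset String) :
    ∃ C : Expr, C.IsContext ∧ C.intf = Δ ∪ {x} ∧ x ∉ C.cv ∧
      C.plug (Expr.var x) = t := by
  induction t with
  | var y =>
    simp only [Expr.mult] at hx
    split at hx
    · next hyx =>
      exact ⟨Expr.hole (Δ ∪ {x}), rfl, rfl, by simp [Expr.cv], by simp [Expr.plug, hyx]⟩
    · omega
  | hole Δ' => simp [Expr.IsTerm, Expr.holes] at ht
  | lam y e ih =>
    simp only [Expr.mult] at hx
    split at hx
    · omega
    · obtain ⟨C, hC, hintf, hcv, hplug⟩ := ih ht hx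
      refine ⟨Expr.lam y C, hC, hintf, ?_, by simp [Expr.plug, hplug]⟩
      simp only [Expr.cv, hC, Expr.IsContext] at *
      simp only [hC, Nat.lt_irrefl, if_pos Nat.one_pos]
      simp only [Finset.mem_union, Finset.mem_singleton]
      rintro (h | h)
      · exact hcv h
      · exact ‹¬ y = x› h.symm
  | app e f ihe ihf =>
    simp only [Expr.IsTerm, Expr.holes, Nat.add_eq_zero] at ht
    simp only [Expr.mult] at hx
    by_cases h : 1 ≤ e.mult x
    · obtain ⟨C, hC, hintf, hcv, hplug⟩ := ihe ht.1 h
      have hC1 : C.holes = 1 := hC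
      refine ⟨Expr.app C f, ?_, ?_, ?_, ?_⟩
      · simp [Expr.IsContext, Expr.holes, hC1, ht.2]
      · simp [Expr.intf, hintf, intf_of_noholes f ht.2]
      · simp [Expr.cv, hcv, cv_of_noholes f ht.2]
      · simp [Expr.plug, hplug, plug_of_noholes f _ ht.2]
    · have hf : 1 ≤ f.mult x := by omega
      obtain ⟨C, hC, hintf, hcv, hplug⟩ := ihf ht.2 hf
      have hC1 : C.holes = 1 := hC
      refine ⟨Expr.app e C, ?_, ?_, ?_, ?_⟩
      · simp [Expr.IsContext, Expr.holes, hC1, ht.1]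
      · simp [Expr.intf, hintf, intf_of_noholes e ht.1]
      · simp [Expr.cv, hcv, cv_of_noholes e ht.1]
      · simp [Expr.plug, hplug, plug_of_noholes e _ ht.1]
  | esub e y f ihe ihf =>
    simp only [Expr.IsTerm, Expr.holes, Nat.add_eq_zero] at ht
    simp only [Expr.mult] at hx
    by_cases hfx : 1 ≤ f.mult x
    · obtain ⟨C, hC, hintf, hcv, hplug⟩ := ihf ht.2 hfx
      have hC1 : C.holes = 1 := hC
      refine ⟨Expr.esub e y C, ?_, ?_, ?_, ?_⟩
      · simp [Expr.IsContext, Expr.holes, hC1, ht.1]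
      · simp [Expr.intf, hintf, intf_of_noholes e ht.1]
      · simp [Expr.cv, hcv, ht.1]
      · simp [Expr.plug, hplug, plug_of_noholes e _ ht.1]
    · have hyx : ¬ y = x := by intro h; simp [h] at hx; omega
      have he : 1 ≤ e.mult x := by simp [hyx] at hx; omega
      obtain ⟨C, hC, hintf, hcv, hplug⟩ := ihe ht.1 he
      have hC1 : C.holes = 1 := hC
      refine ⟨Expr.esub C y f, ?_, ?_, ?_, ?_⟩
      · simp [Expr.IsContext, Expr.holes, hC1, ht.2]
      · simp [Expr.intf, hintf, intf_of_noholes f ht.2]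
      · simp only [Expr.cv, hC1, Nat.lt_irrefl, if_pos Nat.one_pos,
          cv_of_noholes f ht.2, Finset.union_empty, Finset.mem_union,
          Finset.mem_singleton]
        rintro (h | h)
        · exact hcv h
        · exact hyx h.symm
      · simp [Expr.plug, hplug, plug_of_noholes f _ ht.2]
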